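/- arXiv:math-ph/9902025 — 6 statements merged into one kernel-verified Lean document; each statement's English description precedes it below -/
import Mathlib

section
/- For every natural number m and all real x, V_{m+1}(x) ≤ V_m(x), where V_m(x) = (1/m!) ∫_0^∞ u^m e^{-u}/√(x² + u) du. -/
/-!
Write `γₘ(u) = uᵐ e⁻ᵘ / m!` for the Gamma density, so that `Vₘ(x) = ∫₀^∞ γₘ(u) f(u) du` with
`f(u) = (x² + u)^(-1/2)`. Since `γₘ₊₁' = γₘ - γₘ₊₁` and `γₘ₊₁ f` vanishes at both ends of
`(0, ∞)`, integration by parts gives `Vₘ(x) - Vₘ₊₁(x) = -∫₀^∞ γₘ₊₁ f' ≥ 0`, as `f` is decreasing.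
-/

noncomputable def Vm (m : ℕ) (x : ℝ) : ℝ :=
  (1 / (Nat.factorial m : ℝ)) * ∫ u in Set.Ioi (0:ℝ), u^m * Real.exp (-u) / Real.sqrt (x^2 + u)

open MeasureTheory Set Real Filter Topology
open scoped Nat

theorem integral_Ioi_deriv_mul_nonneg_of_deriv_nonpos {a : ℝ} {g g' f f' : ℝ → ℝ}
    (hg : ∀ x ∈ Ioi a, HasDerivAt g (g' x) x) (hf : ∀ x ∈ Ioi a, HasDerivAt f (f' x) x)
    (hgf' : IntegrableOn (g * f') (Ioi a)) (hg'f : IntegrableOn (g' * f) (Ioi a))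
    (h_zero : Tendsto (g * f) (𝓝[>] a) (𝓝 0)) (h_infty : Tendsto (g * f) atTop (𝓝 0))
    (hg_nonneg : ∀ x ∈ Ioi a, 0 ≤ g x) (hf'_nonpos : ∀ x ∈ Ioi a, f' x ≤ 0) :
    0 ≤ ∫ x in Ioi a, g' x * f x := by
  have h_parts := integral_Ioi_mul_deriv_eq_deriv_mul hg hf hgf' hg'f h_zero h_infty
  have h_nonpos : ∫ x in Ioi a, g x * f' x ≤ 0 :=
    setIntegral_nonpos measurableSet_Ioi fun x hx =>
      mul_nonpos_of_nonneg_of_nonpos (hg_nonneg x hx) (hf'_nonpos x hx)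
  linarith

noncomputable def gammaWeight (m : ℕ) (u : ℝ) : ℝ := u ^ m * exp (-u) / m !

@[fun_prop]
theorem continuous_gammaWeight (m : ℕ) : Continuous (gammaWeight m) := by
  unfold gammaWeight; fun_prop

theorem gammaWeight_nonneg (m : ℕ) {u : ℝ} (hu : 0 ≤ u) : 0 ≤ gammaWeight m u := by
  unfold gammaWeight; positivity

theorem gammaWeight_succ (m : ℕ) (u : ℝ) :
    gammaWeight (m + 1) u = gammaWeight m u * u / (m + 1) := by
  simp only [gammaWeight, Nat.factorial_succ, Nat.cast_mul, Nat.cast_succ]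
  field_simp
  ring

theorem hasDerivAt_gammaWeight_succ (m : ℕ) (u : ℝ) :
    HasDerivAt (gammaWeight (m + 1)) (gammaWeight m u - gammaWeight (m + 1) u) u := by
  have h := (((hasDerivAt_pow (m + 1) u).mul (hasDerivAt_neg u).exp)).div_const ((m + 1)! : ℝ)
  refine h.congr_deriv ?_
  simp only [gammaWeight, Nat.factorial_succ, Nat.cast_mul, Nat.cast_succ, Nat.add_sub_cancel]
  field_simp
  ring

theorem tendsto_gammaWeight_atTop (m : ℕ) : Tendsto (gammaWeight m) atTop (𝓝 0) := by
  have h := (tendsto_pow_mul_exp_neg_atTop_nhds_zero m).div_const (m ! : ℝ)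
  rwa [zero_div] at h

section InvSqrt

variable {c : ℝ}

theorem hasDerivAt_inv_sqrt_const_add {u : ℝ} (hcu : 0 < c + u) :
    HasDerivAt (fun v => (√(c + v))⁻¹) (-((√(c + u))⁻¹ / (2 * (c + u)))) u := by
  have hs : √(c + u) ≠ 0 := (sqrt_pos.2 hcu).ne'
  refine ((((hasDerivAt_id u).const_add c).sqrt hcu.ne').inv hs).congr_deriv ?_
  rw [id, sq_sqrt hcu.le]
  field_simp

theorem tendsto_div_sqrt_const_add_nhdsGT_zero (hc : 0 ≤ c) :
    Tendsto (fun u => u / √(c + u)) (𝓝[>] 0) (𝓝 0) := by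
  have h_sqrt : Tendsto (fun u : ℝ => √u) (𝓝[>] 0) (𝓝 0) := by
    simpa using continuous_sqrt.continuousWithinAt (s := Ioi 0) (x := 0) |>.tendsto
  refine squeeze_zero' ?_ ?_ h_sqrt
  · filter_upwards [self_mem_nhdsWithin] with u (hu : 0 < u)
    positivity
  · filter_upwards [self_mem_nhdsWithin] with u (hu : 0 < u)
    calc u / √(c + u) ≤ u / √u := by gcongr; linarith
      _ = √u := div_sqrt

theorem integrableOn_gammaWeight_div_sqrt_const_add (m : ℕ) (hc : 0 ≤ c) :
    IntegrableOn (fun u => gammaWeight m u / √(c + u)) (Ioi 0) := by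
  have h_gamma : IntegrableOn (fun u : ℝ => exp (-u) * u ^ ((m + 1 / 2 : ℝ) - 1) / m !) (Ioi 0) :=
    (GammaIntegral_convergent (by positivity)).div_const _
  refine h_gamma.mono' (by fun_prop : Measurable _).aestronglyMeasurable ?_
  rw [ae_restrict_iff' measurableSet_Ioi]
  filter_upwards with u (hu : 0 < u)
  have h_rpow : u ^ m / √u = u ^ ((m + 1 / 2 : ℝ) - 1) := by
    rw [sqrt_eq_rpow, ← rpow_natCast, ← rpow_sub hu]
    ring_nf
  rw [norm_of_nonneg (by have := gammaWeight_nonneg m hu.le; positivity), ← h_rpow]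
  calc gammaWeight m u / √(c + u) ≤ gammaWeight m u / √u := by
        gcongr
        · exact gammaWeight_nonneg m hu.le
        · linarith
    _ = exp (-u) * (u ^ m / √u) / m ! := by unfold gammaWeight; ring

theorem integrableOn_gammaWeight_succ_mul_deriv_inv_sqrt (m : ℕ) (hc : 0 ≤ c) :
    IntegrableOn (fun u => gammaWeight (m + 1) u * -((√(c + u))⁻¹ / (2 * (c + u)))) (Ioi 0) := by
  refine (integrableOn_gammaWeight_div_sqrt_const_add m hc).mono'
    (by fun_prop : Measurable _).aestronglyMeasurable ?_
  rw [ae_restrict_iff' measurableSet_Ioi]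
  filter_upwards with u (hu : 0 < u)
  have hcu : 0 < c + u := by linarith
  have hγ := gammaWeight_nonneg m hu.le
  rw [norm_mul, norm_neg, norm_of_nonneg (gammaWeight_nonneg _ hu.le),
    norm_of_nonneg (by positivity), gammaWeight_succ]
  have hu_le : u / (c + u) ≤ 1 := (div_le_one hcu).2 (by linarith)
  calc gammaWeight m u * u / (m + 1) * ((√(c + u))⁻¹ / (2 * (c + u)))
      = gammaWeight m u / √(c + u) * (u / (c + u)) / (2 * (m + 1)) := by field_simp
    _ ≤ gammaWeight m u / √(c + u) * 1 / 1 := by gcongr; linarith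
    _ = gammaWeight m u / √(c + u) := by ring

theorem tendsto_gammaWeight_succ_mul_inv_sqrt_nhdsGT_zero (m : ℕ) (hc : 0 ≤ c) :
    Tendsto (fun u => gammaWeight (m + 1) u * (√(c + u))⁻¹) (𝓝[>] 0) (𝓝 0) := by
  have h := (((continuous_gammaWeight m).tendsto 0).mono_left nhdsWithin_le_nhds).div_const
    ((m : ℝ) + 1) |>.mul (tendsto_div_sqrt_const_add_nhdsGT_zero hc)
  rw [mul_zero] at h
  refine h.congr fun u => ?_
  rw [gammaWeight_succ]
  ring

theorem tendsto_gammaWeight_mul_inv_sqrt_atTop (m : ℕ) :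
    Tendsto (fun u => gammaWeight m u * (√(c + u))⁻¹) atTop (𝓝 0) := by
  have h_inv : Tendsto (fun u => (√(c + u))⁻¹) atTop (𝓝 0) :=
    tendsto_inv_atTop_zero.comp <|
      tendsto_sqrt_atTop.comp (tendsto_atTop_add_const_left _ c tendsto_id)
  simpa only [mul_zero] using (tendsto_gammaWeight_atTop m).mul h_inv

theorem integral_gammaWeight_succ_div_sqrt_le (m : ℕ) (hc : 0 ≤ c) :
    ∫ u in Ioi 0, gammaWeight (m + 1) u / √(c + u) ≤ ∫ u in Ioi 0, gammaWeight m u / √(c + u) := by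
  have hI := integrableOn_gammaWeight_div_sqrt_const_add m hc
  have hI_succ := integrableOn_gammaWeight_div_sqrt_const_add (m + 1) hc
  have h_parts := integral_Ioi_deriv_mul_nonneg_of_deriv_nonpos
    (fun u _ => hasDerivAt_gammaWeight_succ m u)
    (fun u (hu : 0 < u) => hasDerivAt_inv_sqrt_const_add (c := c) (by linarith))
    (integrableOn_gammaWeight_succ_mul_deriv_inv_sqrt m hc)
    ((hI.sub hI_succ).congr_fun (fun u _ => by simp only [Pi.sub_apply, Pi.mul_apply]; ring)
      measurableSet_Ioi)
    (tendsto_gammaWeight_succ_mul_inv_sqrt_nhdsGT_zero m hc)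
    (tendsto_gammaWeight_mul_inv_sqrt_atTop (m + 1))
    (fun u hu => gammaWeight_nonneg (m + 1) (le_of_lt hu))
    (fun u (hu : 0 < u) => neg_nonpos.2 (div_nonneg (by positivity) (by linarith)))
  rw [← sub_nonneg, ← integral_sub hI hI_succ]
  simpa only [← div_eq_mul_inv, sub_div] using h_parts

end InvSqrt

theorem Vm_eq_integral_gammaWeight (m : ℕ) (x : ℝ) :
    Vm m x = ∫ u in Ioi 0, gammaWeight m u / √(x ^ 2 + u) := by
  rw [Vm, ← integral_const_mul]
  congr 1 with u
  unfold gammaWeight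
  ring

theorem Vm_antitone : ∀ (m : ℕ) (x : ℝ), Vm (m+1) x ≤ Vm m x := by
  intro m x
  rw [Vm_eq_integral_gammaWeight, Vm_eq_integral_gammaWeight]
  exact integral_gammaWeight_succ_div_sqrt_le m (sq_nonneg x)
end

section
/- For every natural number m and all real x, V_m(x) ≥ 1/√((m+1) + x²), and consequently V_m(x) ≥ 1/(√(m+1) + |x|). -/
/-!
`Vm m x` is the mean of `t ↦ 1 / √t` at `t = x² + U`, where `U` has the Gamma density
`u ^ m * exp (-u) / m!`, whose mean is `m + 1`. Since `t ↦ 1 / √t` is convex, Jensen's inequality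
gives `Vm m x ≥ 1 / √(m + 1 + x²)`; concretely we integrate the tangent line of `1 / √t`
at `s = m + 1 + x²`, which lies below it.
-/

open MeasureTheory Set Real
open scoped Nat

lemma integrableOn_rpow_mul_exp_neg_Ioi {s : ℝ} (hs : -1 < s) :
    IntegrableOn (fun u : ℝ => u ^ s * exp (-u)) (Ioi 0) := by
  simpa using integrableOn_rpow_mul_exp_neg_rpow hs one_pos

lemma integrableOn_pow_mul_exp_neg_Ioi (n : ℕ) :
    IntegrableOn (fun u : ℝ => u ^ n * exp (-u)) (Ioi 0) := by
  simpa using integrableOn_rpow_mul_exp_neg_Ioi (s := n) (by linarith [n.cast_nonneg (α := ℝ)])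

lemma integral_pow_mul_exp_neg_Ioi (n : ℕ) :
    ∫ u in Ioi (0 : ℝ), u ^ n * exp (-u) = n ! := by
  simpa [Gamma_nat_eq_factorial] using
    integral_rpow_mul_exp_neg_rpow one_pos (q := n) (by linarith [n.cast_nonneg (α := ℝ)])

lemma integrableOn_pow_mul_exp_neg_div_sqrt_add {c : ℝ} (hc : 0 ≤ c) (n : ℕ) :
    IntegrableOn (fun u : ℝ => u ^ n * exp (-u) / √(c + u)) (Ioi 0) := by
  refine (integrableOn_rpow_mul_exp_neg_Ioi (s := n - 1 / 2)
    (by linarith [n.cast_nonneg (α := ℝ)])).mono'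
    (by fun_prop : Measurable _).aestronglyMeasurable ?_
  refine ae_restrict_of_forall_mem measurableSet_Ioi fun u (hu : 0 < u) => ?_
  have hu_rpow : u ^ ((n : ℝ) - 1 / 2) = u ^ n / √u := by
    rw [rpow_sub hu, rpow_natCast, sqrt_eq_rpow]
  rw [norm_of_nonneg (by positivity), hu_rpow, div_mul_eq_mul_div]
  gcongr
  linarith

lemma pow_mul_exp_neg_mul_affine_eq (n : ℕ) (a b u : ℝ) :
    u ^ n * exp (-u) * (a - b * u) = a * (u ^ n * exp (-u)) - b * (u ^ (n + 1) * exp (-u)) := by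
  ring

lemma integrableOn_pow_mul_exp_neg_mul_affine (n : ℕ) (a b : ℝ) :
    IntegrableOn (fun u : ℝ => u ^ n * exp (-u) * (a - b * u)) (Ioi 0) := by
  simp_rw [pow_mul_exp_neg_mul_affine_eq]
  exact ((integrableOn_pow_mul_exp_neg_Ioi n).const_mul a).sub
    ((integrableOn_pow_mul_exp_neg_Ioi (n + 1)).const_mul b)

lemma integral_pow_mul_exp_neg_mul_affine (n : ℕ) (a b : ℝ) :
    ∫ u in Ioi (0 : ℝ), u ^ n * exp (-u) * (a - b * u) = n ! * (a - b * (n + 1)) := by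
  simp_rw [pow_mul_exp_neg_mul_affine_eq]
  rw [integral_sub ((integrableOn_pow_mul_exp_neg_Ioi n).const_mul a)
      ((integrableOn_pow_mul_exp_neg_Ioi (n + 1)).const_mul b),
    integral_const_mul, integral_const_mul, integral_pow_mul_exp_neg_Ioi,
    integral_pow_mul_exp_neg_Ioi, Nat.factorial_succ]
  push_cast
  ring

/-- The tangent line at `s` of the convex function `t ↦ 1 / √t`. -/
lemma tangent_le_one_div_sqrt {s t : ℝ} (hs : 0 < s) (ht : 0 < t) :
    (3 * s - t) / (2 * s * √s) ≤ 1 / √t := by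
  obtain ⟨a, ha, rfl⟩ : ∃ a, 0 < a ∧ t = a ^ 2 :=
    ⟨√t, sqrt_pos.2 ht, (sq_sqrt ht.le).symm⟩
  obtain ⟨b, hb, rfl⟩ : ∃ b, 0 < b ∧ s = b ^ 2 :=
    ⟨√s, sqrt_pos.2 hs, (sq_sqrt hs.le).symm⟩
  rw [sqrt_sq ha.le, sqrt_sq hb.le, div_le_div_iff₀ (by positivity) ha]
  -- `2 b³ - a (3 b² - a²) = (a - b)² (a + 2 b)`
  nlinarith [mul_nonneg (sq_nonneg (a - b)) (by positivity : (0 : ℝ) ≤ a + 2 * b)]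

theorem one_div_sqrt_le_Vm (m : ℕ) (x : ℝ) : 1 / √((m + 1) + x ^ 2) ≤ Vm m x := by
  obtain ⟨s, hs_def⟩ : ∃ s : ℝ, (m + 1) + x ^ 2 = s := ⟨_, rfl⟩
  have hs : 0 < s := by rw [← hs_def]; positivity
  set a := (3 * s - x ^ 2) / (2 * s * √s)
  set b := 1 / (2 * s * √s)
  have tangent_integral : ∫ u in Ioi (0 : ℝ), u ^ m * exp (-u) * (a - b * u) = m ! / √s := by
    rw [integral_pow_mul_exp_neg_mul_affine]
    simp only [a, b]
    field_simp
    linear_combination -hs_def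
  have hmono := setIntegral_mono_on (integrableOn_pow_mul_exp_neg_mul_affine m a b)
    (integrableOn_pow_mul_exp_neg_div_sqrt_add (sq_nonneg x) m) measurableSet_Ioi
    fun u (hu : 0 < u) => by
      have htangent : a - b * u = (3 * s - (x ^ 2 + u)) / (2 * s * √s) := by ring
      rw [htangent, div_eq_mul_one_div (u ^ m * exp (-u))]
      exact mul_le_mul_of_nonneg_left (tangent_le_one_div_sqrt hs (by positivity))
        (by positivity)
  rw [tangent_integral] at hmono
  calc 1 / √((m + 1) + x ^ 2) = 1 / (m ! : ℝ) * (m ! / √s) := by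
        rw [hs_def]; field_simp
    _ ≤ Vm m x := by rw [Vm]; gcongr

lemma sqrt_add_sq_le_sqrt_add_abs {a : ℝ} (ha : 0 ≤ a) (x : ℝ) :
    √(a + x ^ 2) ≤ √a + |x| := by
  rw [sqrt_le_iff]
  refine ⟨by positivity, ?_⟩
  nlinarith [sq_sqrt ha, sq_abs x, sqrt_nonneg a, abs_nonneg x]

theorem Vm_lower_bounds : ∀ (m : ℕ) (x : ℝ),
    Vm m x ≥ 1 / Real.sqrt (((m:ℝ)+1) + x^2) ∧
    Vm m x ≥ 1 / (Real.sqrt ((m:ℝ)+1) + |x|) := by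
  intro m x
  have h := one_div_sqrt_le_Vm m x
  refine ⟨h, le_trans ?_ h⟩
  exact one_div_le_one_div_of_le (sqrt_pos.2 (by positivity))
    (sqrt_add_sq_le_sqrt_add_abs (by positivity) x)
end

section
/- For every natural number m and all real y, V_m(y/√2) ≤ √2 · V_m(y). -/
open Real Set MeasureTheory

lemma Vm_integrable (m : ℕ) (x : ℝ) :
    IntegrableOn (fun u : ℝ => u^m * Real.exp (-u) / Real.sqrt (x^2 + u)) (Ioi 0) := by
  have hg : IntegrableOn (fun u : ℝ => Real.exp (-u) * u ^ (((m : ℝ) + 1/2) - 1)) (Ioi 0) :=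
    Real.GammaIntegral_convergent (by positivity)
  apply hg.mono'
  · apply ContinuousOn.aestronglyMeasurable _ measurableSet_Ioi
    apply ContinuousOn.div
    · exact (continuous_pow m).continuousOn.mul
        (Real.continuous_exp.comp continuous_neg).continuousOn
    · exact (Real.continuous_sqrt.comp (by continuity)).continuousOn
    · intro u hu
      have : (0:ℝ) < x^2 + u := by
        have := hu.out; positivity
      exact (Real.sqrt_pos.mpr this).ne'
  · rw [ae_restrict_iff' measurableSet_Ioi]
    filter_upwards with u hu
    have hu0 : (0:ℝ) < u := hu
    have hsq : Real.sqrt u ≤ Real.sqrt (x^2 + u) := by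
      apply Real.sqrt_le_sqrt; nlinarith [sq_nonneg x]
    have hsqu : (0:ℝ) < Real.sqrt u := Real.sqrt_pos.mpr hu0
    have hnn : (0:ℝ) ≤ u^m * Real.exp (-u) / Real.sqrt (x^2 + u) := by positivity
    rw [Real.norm_eq_abs, abs_of_nonneg hnn]
    have hb : u^m * Real.exp (-u) / Real.sqrt (x^2 + u)
        ≤ u^m * Real.exp (-u) / Real.sqrt u := by
      apply div_le_div_of_nonneg_left (by positivity) hsqu hsq
    refine hb.trans_eq ?_
    rw [Real.sqrt_eq_rpow, ← Real.rpow_natCast u m, div_eq_mul_inv,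
      ← Real.rpow_neg hu0.le]
    have hx : u ^ (((m:ℝ) + 1/2) - 1) = u ^ (m:ℝ) * u ^ (-(1/2):ℝ) := by
      rw [← Real.rpow_add hu0]; congr 1; ring
    rw [hx]; ring

theorem Vm_sqrt_two_bound : ∀ (m : ℕ) (y : ℝ),
    Vm m (y / Real.sqrt 2) ≤ Real.sqrt 2 * Vm m y := by
  intro m y
  have h2 : (0:ℝ) < Real.sqrt 2 := Real.sqrt_pos.mpr (by norm_num)
  unfold Vm
  rw [mul_left_comm]
  apply mul_le_mul_of_nonneg_left _ (by positivity)
  have key : ∫ u in Ioi (0:ℝ), u^m * Real.exp (-u) / Real.sqrt ((y / Real.sqrt 2)^2 + u)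
      ≤ ∫ u in Ioi (0:ℝ), Real.sqrt 2 * (u^m * Real.exp (-u) / Real.sqrt (y^2 + u)) := by
    apply setIntegral_mono_on (Vm_integrable m _) ((Vm_integrable m y).const_mul _)
      measurableSet_Ioi
    intro u hu
    have hu0 : (0:ℝ) < u := hu
    set a := u^m * Real.exp (-u) with ha
    have hann : (0:ℝ) ≤ a := by positivity
    have hc : (0:ℝ) < Real.sqrt (y^2 + u) := Real.sqrt_pos.mpr (by positivity)
    have hd : (0:ℝ) < Real.sqrt ((y / Real.sqrt 2)^2 + u) := Real.sqrt_pos.mpr (by positivity)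
    have hcd : Real.sqrt (y^2 + u) ≤ Real.sqrt 2 * Real.sqrt ((y / Real.sqrt 2)^2 + u) := by
      rw [← Real.sqrt_mul (by norm_num)]
      apply Real.sqrt_le_sqrt
      have : (y / Real.sqrt 2)^2 = y^2 / 2 := by
        rw [div_pow, Real.sq_sqrt (by norm_num)]
      rw [this]
      nlinarith
    have hrw : Real.sqrt 2 * (a / Real.sqrt (y^2 + u))
        = a / (Real.sqrt (y^2 + u) / Real.sqrt 2) := by
      field_simp
    rw [hrw]
    gcongr a / ?_
    rw [div_le_iff₀ h2]
    linarith [hcd]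
  calc _ ≤ _ := key
    _ = Real.sqrt 2 * ∫ u in Ioi (0:ℝ), u^m * Real.exp (-u) / Real.sqrt (y^2 + u) :=
      integral_const_mul _ _
end

section
/- For all x > 0, (3x + √(x²+4))/4 < 1/V_0(x) < (2x + √(x²+3))/3; equivalently g_3(x) < V_0(x) < g_4(x) where g_k(x) = k/((k−1)x + √(x²+k)). -/
/-!
The tail integral `F x = ∫ t in Ioi x, exp (-t ^ 2)` has `F' = -exp (-x ^ 2)`, so `V0 = 2 exp (x ^ 2) F`
solves `V' = 2 x V - 2`. For a candidate `G`, the function `exp (-x ^ 2) G / 2 - F` has derivative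
`exp (-x ^ 2) (G' - 2 x G + 2) / 2` and tends to `0` at infinity; hence `V0 x < G x` if this defect
is negative on `[x, ∞)`, and `G x < V0 x` if it is positive there. For `G = g k` the defect, cleared of the denominator
`√(x ^ 2 + k) ((k - 1) x + √(x ^ 2 + k)) ^ 2`, is linear in `√(x ^ 2 + k)`: for `k = 4` it equals
`-4 (√(x ^ 2 + 4) (x ^ 2 + 1) - x (x ^ 2 + 3))` and for `k = 3` it equals `x (2 x ^ 2 + 3 - 2 x √(x ^ 2 + 3))`,
whose signs follow by squaring.
-/

noncomputable def V0 (x : ℝ) : ℝ := 2 * Real.exp (x^2) * ∫ t in Set.Ioi x, Real.exp (-t^2)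

noncomputable def g (k : ℝ) (x : ℝ) : ℝ := k / ((k-1)*x + Real.sqrt (x^2 + k))

open Real MeasureTheory Set Filter Topology

theorem hasDerivAt_integral_Ioi {E : Type*} [NormedAddCommGroup E] [NormedSpace ℝ E]
    [CompleteSpace E] {f : ℝ → E} (hf : Continuous f) (hfi : Integrable f) (x : ℝ) :
    HasDerivAt (fun y => ∫ t in Ioi y, f t) (-f x) x := by
  have htail : (fun y => ∫ t in Ioi y, f t) = fun y => (∫ t in Ioi 0, f t) - ∫ t in 0..y, f t :=
    funext fun y => eq_sub_of_add_eq' <|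
      intervalIntegral.integral_interval_add_Ioi hfi.integrableOn hfi.integrableOn
  rw [htail]
  exact ((hf.integral_hasStrictDerivAt 0 x).hasDerivAt).const_sub _

theorem hasDerivAt_integral_Ioi_exp_neg_sq (x : ℝ) :
    HasDerivAt (fun y => ∫ t in Ioi y, exp (-t ^ 2)) (-exp (-x ^ 2)) x :=
  hasDerivAt_integral_Ioi (by fun_prop) (by simpa using integrable_exp_neg_mul_sq one_pos) x

theorem V0_eq_div (x : ℝ) : V0 x = 2 * (∫ t in Ioi x, exp (-t ^ 2)) / exp (-x ^ 2) := by
  rw [V0, exp_neg, div_inv_eq_mul]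
  ring

theorem lt_of_hasDerivAt_lt_of_tendsto_atTop {f g f' g' : ℝ → ℝ} {a l : ℝ}
    (hf : ∀ y ∈ Ici a, HasDerivAt f (f' y) y) (hg : ∀ y ∈ Ici a, HasDerivAt g (g' y) y)
    (hlt : ∀ y ∈ Ici a, g' y < f' y)
    (hfl : Tendsto f atTop (𝓝 l)) (hgl : Tendsto g atTop (𝓝 l)) : f a < g a := by
  have hmono : StrictMonoOn (f - g) (Ici a) := by
    refine strictMonoOn_of_hasDerivWithinAt_pos (f' := f' - g') (convex_Ici a)
      (fun y hy => ((hf y hy).sub (hg y hy)).continuousAt.continuousWithinAt)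
      (fun y hy => ?_) (fun y hy => ?_)
    all_goals replace hy : y ∈ Ici a := Ioi_subset_Ici_self (interior_Ici (a := a) ▸ hy)
    · exact ((hf y hy).sub (hg y hy)).hasDerivWithinAt
    · exact sub_pos.2 (hlt y hy)
  have hle : (f - g) (a + 1) ≤ 0 := by
    refine ge_of_tendsto (by simpa using hfl.sub hgl) ?_
    filter_upwards [eventually_gt_atTop (a + 1)] with y hy
    exact (hmono (mem_Ici.2 (by linarith)) (mem_Ici.2 (by linarith)) hy).le
  have := hmono self_mem_Ici (mem_Ici.2 (by linarith)) (lt_add_one a)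
  simp only [Pi.sub_apply] at this hle
  linarith

noncomputable def gDen (k x : ℝ) : ℝ := (k - 1) * x + √(x ^ 2 + k)

noncomputable def gDeriv (k x : ℝ) : ℝ :=
  -k * ((k - 1) * √(x ^ 2 + k) + x) / (√(x ^ 2 + k) * gDen k x ^ 2)

noncomputable def odeDefect (k x : ℝ) : ℝ := gDeriv k x - 2 * x * g k x + 2

section
variable {k x : ℝ}

theorem g_eq_div_gDen : g k x = k / gDen k x := rfl

theorem lt_sqrt_sq_add (hk : 0 < k) : x < √(x ^ 2 + k) :=
  Real.lt_sqrt_of_sq_lt (by linarith)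

theorem gDen_pos (hk : 0 < k) (hx : 0 ≤ x) : 0 < gDen k x := by
  have := lt_sqrt_sq_add hk (x := x)
  unfold gDen
  nlinarith

theorem g_pos (hk : 0 < k) (hx : 0 ≤ x) : 0 < g k x := div_pos hk (gDen_pos hk hx)

theorem g_lt_inv (hk : 0 < k) (hx : 0 < x) : g k x < x⁻¹ := by
  have hkx : k * x < gDen k x := by
    have := lt_sqrt_sq_add hk (x := x)
    unfold gDen
    linarith
  calc g k x < k / (k * x) := div_lt_div_of_pos_left hk (by positivity) hkx
    _ = x⁻¹ := by field_simp

theorem tendsto_g_atTop (hk : 0 < k) : Tendsto (g k) atTop (𝓝 0) :=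
  squeeze_zero' (eventually_gt_atTop 0 |>.mono fun _ hx => (g_pos hk hx.le).le)
    (eventually_gt_atTop 0 |>.mono fun _ hx => (g_lt_inv hk hx).le) tendsto_inv_atTop_zero

theorem hasDerivAt_gDen (hk : 0 < k) :
    HasDerivAt (gDen k) ((k - 1) + x / √(x ^ 2 + k)) x := by
  have hsq : HasDerivAt (fun y => √(y ^ 2 + k)) (x / √(x ^ 2 + k)) x := by
    convert ((hasDerivAt_pow 2 x).add_const k).sqrt (by positivity) using 1
    field_simp
    ring
  exact ((hasDerivAt_id x).const_mul (k - 1)).add hsq |>.congr_deriv (by simp)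

theorem hasDerivAt_g (hk : 0 < k) (hx : 0 ≤ x) : HasDerivAt (g k) (gDeriv k x) x := by
  refine ((hasDerivAt_const x k).div (hasDerivAt_gDen hk) (gDen_pos hk hx).ne').congr_deriv ?_
  rw [gDeriv]
  field_simp
  ring

theorem odeDefect_mul_eq (hk : 0 < k) (hx : 0 ≤ x) :
    odeDefect k x * (√(x ^ 2 + k) * gDen k x ^ 2) =
      √(x ^ 2 + k) * ((3 - k) * k + (4 - 2 * k) * x ^ 2) +
        x * ((2 * k - 5) * k + (2 * k - 4) * x ^ 2) := by
  have hs2 : √(x ^ 2 + k) ^ 2 = x ^ 2 + k := Real.sq_sqrt (by positivity)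
  have hd := (gDen_pos hk hx).ne'
  rw [odeDefect, gDeriv, g_eq_div_gDen]
  field_simp
  unfold gDen
  linear_combination (2 * √(x ^ 2 + k) + (2 * k - 4) * x) * hs2

theorem odeDefect_four_neg (hx : 0 < x) : odeDefect 4 x < 0 := by
  have hs2 : √(x ^ 2 + 4) ^ 2 = x ^ 2 + 4 := Real.sq_sqrt (by positivity)
  have hlt : x * (x ^ 2 + 3) < √(x ^ 2 + 4) * (x ^ 2 + 1) :=
    lt_of_pow_lt_pow_left₀ 2 (by positivity) (by rw [mul_pow, mul_pow, hs2]; nlinarith)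
  have hid := odeDefect_mul_eq (k := 4) (by norm_num) hx.le
  refine neg_of_mul_neg_left (b := √(x ^ 2 + 4) * gDen 4 x ^ 2) ?_ ?_
  · rw [hid]; nlinarith
  · have := gDen_pos (k := 4) (by norm_num) hx.le
    positivity

theorem odeDefect_three_pos (hx : 0 < x) : 0 < odeDefect 3 x := by
  have hs2 : √(x ^ 2 + 3) ^ 2 = x ^ 2 + 3 := Real.sq_sqrt (by positivity)
  have hlt : 2 * x * √(x ^ 2 + 3) < 2 * x ^ 2 + 3 :=
    lt_of_pow_lt_pow_left₀ 2 (by positivity) (by rw [mul_pow, mul_pow, hs2]; nlinarith)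
  have hid := odeDefect_mul_eq (k := 3) (by norm_num) hx.le
  refine pos_of_mul_pos_left (b := √(x ^ 2 + 3) * gDen 3 x ^ 2) ?_ ?_
  · rw [hid]; nlinarith
  · positivity

theorem hasDerivAt_exp_neg_sq_mul_g (hk : 0 < k) (hx : 0 ≤ x) :
    HasDerivAt (fun y => exp (-y ^ 2) * g k y / 2) (exp (-x ^ 2) * (odeDefect k x - 2) / 2) x := by
  have hexp : HasDerivAt (fun y => exp (-y ^ 2)) (-(2 * x) * exp (-x ^ 2)) x := by
    simpa [mul_comm] using ((hasDerivAt_pow 2 x).neg).exp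
  refine ((hexp.mul (hasDerivAt_g hk hx)).div_const 2).congr_deriv ?_
  rw [odeDefect]
  ring

theorem tendsto_exp_neg_sq_mul_g (hk : 0 < k) :
    Tendsto (fun y => exp (-y ^ 2) * g k y / 2) atTop (𝓝 0) := by
  have hexp : Tendsto (fun y : ℝ => exp (-y ^ 2)) atTop (𝓝 0) :=
    tendsto_exp_neg_atTop_nhds_zero.comp (tendsto_pow_atTop two_ne_zero)
  simpa using (hexp.mul (tendsto_g_atTop hk)).div_const 2

theorem integral_Ioi_exp_neg_sq_lt (hx : 0 < x) :
    ∫ t in Ioi x, exp (-t ^ 2) < exp (-x ^ 2) * g 4 x / 2 :=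
  lt_of_hasDerivAt_lt_of_tendsto_atTop (fun y _ => hasDerivAt_integral_Ioi_exp_neg_sq y)
    (fun y hy => hasDerivAt_exp_neg_sq_mul_g four_pos (hx.le.trans hy))
    (fun y hy => by nlinarith [exp_pos (-y ^ 2), odeDefect_four_neg (hx.trans_le hy)])
    (tendsto_integral_Ioi_zero tendsto_id) (tendsto_exp_neg_sq_mul_g four_pos)

theorem lt_integral_Ioi_exp_neg_sq (hx : 0 < x) :
    exp (-x ^ 2) * g 3 x / 2 < ∫ t in Ioi x, exp (-t ^ 2) :=
  lt_of_hasDerivAt_lt_of_tendsto_atTop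
    (fun y hy => hasDerivAt_exp_neg_sq_mul_g three_pos (hx.le.trans hy))
    (fun y _ => hasDerivAt_integral_Ioi_exp_neg_sq y)
    (fun y hy => by nlinarith [exp_pos (-y ^ 2), odeDefect_three_pos (hx.trans_le hy)])
    (tendsto_exp_neg_sq_mul_g three_pos) (tendsto_integral_Ioi_zero tendsto_id)

theorem V0_lt_g_four (hx : 0 < x) : V0 x < g 4 x := by
  rw [V0_eq_div, div_lt_iff₀ (exp_pos _)]
  linarith [integral_Ioi_exp_neg_sq_lt hx]

theorem g_three_lt_V0 (hx : 0 < x) : g 3 x < V0 x := by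
  rw [V0_eq_div, lt_div_iff₀ (exp_pos _)]
  linarith [lt_integral_Ioi_exp_neg_sq hx]

end

theorem one_div_g (k x : ℝ) : 1 / g k x = ((k - 1) * x + √(x ^ 2 + k)) / k := one_div_div _ _

theorem nu_bounds : ∀ x : ℝ, 0 < x →
    ((3*x + Real.sqrt (x^2+4))/4 < 1 / V0 x ∧ 1 / V0 x < (2*x + Real.sqrt (x^2+3))/3) ∧
    (g 3 x < V0 x ∧ V0 x < g 4 x) := by
  intro x hx
  have hlow := g_three_lt_V0 hx
  have hupp := V0_lt_g_four hx
  have hg3 : 0 < g 3 x := g_pos three_pos hx.le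
  refine ⟨⟨?_, ?_⟩, hlow, hupp⟩
  · calc (3 * x + √(x ^ 2 + 4)) / 4 = 1 / g 4 x := by rw [one_div_g]; norm_num
      _ < 1 / V0 x := one_div_lt_one_div_of_lt (hg3.trans hlow) hupp
  · calc 1 / V0 x < 1 / g 3 x := one_div_lt_one_div_of_lt hg3 hlow
      _ = (2 * x + √(x ^ 2 + 3)) / 3 := by rw [one_div_g]; norm_num
end

section
/- For k = 3 and all x > 0, g_3'(x) > 2(x·g_3(x) − 1), where g_3(x) = 3/(2x + √(x²+3)). -/
/-!
Write `s = √(x² + k)` and `d = (k - 1)x + s`, so that `g k x = k / d`, `x g k x - 1 = (x - s) / d` and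
`g' = -k((k - 1)s + x) / (s d²)`. Since `(s - x)(s + x) = k`, the inequality reduces to
`((k - 1)s + x)(s + x) < 2 s d`, whose difference is `(k - 2)xs + (3 - k)s² - x²`; this is positive
for `2 ≤ k ≤ 3` because `s > x > 0`.
-/

open Real Set

lemma hasDerivAt_g_s10 {k x : ℝ} (hk : 0 < x ^ 2 + k) (hd : (k - 1) * x + √(x ^ 2 + k) ≠ 0) :
    HasDerivAt (g k)
      (-(k * ((k - 1) + x / √(x ^ 2 + k))) / ((k - 1) * x + √(x ^ 2 + k)) ^ 2) x := by
  have hsqrt : HasDerivAt (fun y => √(y ^ 2 + k)) (x / √(x ^ 2 + k)) x := by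
    have hsq : HasDerivAt (fun y => y ^ 2 + k) (2 * x) x := by
      simpa using (hasDerivAt_pow 2 x).add_const k
    convert hsq.sqrt hk.ne' using 1
    field_simp
  have hden : HasDerivAt (fun y => (k - 1) * y + √(y ^ 2 + k)) ((k - 1) + x / √(x ^ 2 + k)) x := by
    have h := ((hasDerivAt_id' x).const_mul (k - 1)).add hsqrt
    rw [mul_one] at h
    exact h
  exact ((hasDerivAt_const x k).div hden hd).congr_deriv (by ring)

lemma two_mul_mul_div_sub_one_lt {k x s : ℝ} (hk : k ∈ Icc 2 3) (hx : 0 < x)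
    (hs : s ^ 2 = x ^ 2 + k) (hs₀ : 0 ≤ s) :
    2 * (x * (k / ((k - 1) * x + s)) - 1) < -(k * ((k - 1) + x / s)) / ((k - 1) * x + s) ^ 2 := by
  obtain ⟨hk₂, hk₃⟩ := hk
  have hxs : x < s := by nlinarith
  have hs₀' : 0 < s := hx.trans hxs
  have hd : 0 < (k - 1) * x + s := by nlinarith
  have hreduced : ((k - 1) * s + x) * (s + x) < 2 * s * ((k - 1) * x + s) := by
    nlinarith [mul_le_mul_of_nonneg_left hxs.le (by linarith : 0 ≤ 3 - k), mul_pos hx (sub_pos.mpr hxs)]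
  -- `(s - x)(s + x) = k` turns `hreduced` into the cleared-denominator form of the goal
  have hcleared : k * ((k - 1) * s + x) < 2 * (s - x) * s * ((k - 1) * x + s) := by
    nlinarith [mul_lt_mul_of_pos_right hreduced (sub_pos.mpr hxs)]
  rw [show x * (k / ((k - 1) * x + s)) - 1 = (x - s) / ((k - 1) * x + s) by
      rw [mul_div_assoc', div_sub_one hd.ne']; ring,
    show -(k * ((k - 1) + x / s)) / ((k - 1) * x + s) ^ 2
      = -(k * ((k - 1) * s + x)) / (s * ((k - 1) * x + s) ^ 2) by field_simp,
    mul_div_assoc', div_lt_div_iff₀ hd (by positivity)]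
  nlinarith [mul_lt_mul_of_pos_right hcleared hd]

theorem two_mul_mul_g_sub_one_lt_deriv_g {k x : ℝ} (hk : k ∈ Icc 2 3) (hx : 0 < x) :
    2 * (x * g k x - 1) < deriv (g k) x := by
  have hpos : 0 < x ^ 2 + k := by nlinarith [hk.1]
  have hd : 0 < (k - 1) * x + √(x ^ 2 + k) := by nlinarith [hk.1, sqrt_nonneg (x ^ 2 + k)]
  rw [(hasDerivAt_g_s10 hpos hd.ne').deriv]
  exact two_mul_mul_div_sub_one_lt hk hx (sq_sqrt hpos.le) (sqrt_nonneg _)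

theorem g3_deriv_ineq : ∀ x : ℝ, 0 < x → deriv (g 3) x > 2 * (x * g 3 x - 1) :=
  fun _ hx => two_mul_mul_g_sub_one_lt_deriv_g ⟨by norm_num, le_rfl⟩ hx
end

section
/- For all x > 0, |1/V_0(x) − x| < 1/(2x). -/
/-!
Both bounds compare the Gaussian tail `∫_x^∞ e^{-t²}` with the integral of an explicit derivative.
For `t > x > 0`, `e^{-t²} ≤ (t/x) e^{-t²} = d/dt (-e^{-t²}/(2x))`, whence `V0 x ≤ 1/x`.
For all `t`, `e^{-t²} > e^{-t²} - 2e^{-t²}/(2t²+1)² = d/dt (-t e^{-t²}/(2t²+1))`, whence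
`V0 x > 2x/(2x²+1)`, i.e. `1 / V0 x < x + 1/(2x)`.
-/

open MeasureTheory Set Filter Real Topology

section ImproperComparison

variable {f g g' : ℝ → ℝ} {a : ℝ}

theorem setIntegral_Ioi_le_of_hasDerivAt_of_tendsto (hderiv : ∀ t ∈ Ici a, HasDerivAt g (g' t) t)
    (hg' : IntegrableOn g' (Ioi a)) (hg : Tendsto g atTop (𝓝 0)) (hf : IntegrableOn f (Ioi a))
    (hle : ∀ t ∈ Ioi a, f t ≤ g' t) : ∫ t in Ioi a, f t ≤ -g a :=
  calc ∫ t in Ioi a, f t ≤ ∫ t in Ioi a, g' t := setIntegral_mono_on hf hg' measurableSet_Ioi hle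
    _ = -g a := by rw [integral_Ioi_of_hasDerivAt_of_tendsto' hderiv hg' hg, zero_sub]

theorem neg_lt_setIntegral_Ioi_of_hasDerivAt_of_tendsto
    (hderiv : ∀ t ∈ Ici a, HasDerivAt g (g' t) t) (hg' : IntegrableOn g' (Ioi a))
    (hg : Tendsto g atTop (𝓝 0)) (hf : IntegrableOn f (Ioi a))
    (hlt : ∀ t ∈ Ioi a, g' t < f t) : -g a < ∫ t in Ioi a, f t := by
  have hgap : 0 < ∫ t in Ioi a, (f t - g' t) := by
    rw [← Pi.sub_def, setIntegral_pos_iff_support_of_nonneg_ae _ (hf.sub hg')]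
    · have : Function.support (f - g') ∩ Ioi a = Ioi a :=
        inter_eq_right.mpr fun t ht => (sub_pos.mpr (hlt t ht)).ne'
      simp [this]
    · filter_upwards [ae_restrict_mem measurableSet_Ioi] with t ht
      exact (sub_pos.mpr (hlt t ht)).le
  rw [integral_sub hf hg', integral_Ioi_of_hasDerivAt_of_tendsto' hderiv hg' hg] at hgap
  linarith

end ImproperComparison

theorem integrable_exp_neg_sq : Integrable fun t : ℝ => exp (-t ^ 2) := by
  simpa using integrable_exp_neg_mul_sq one_pos

theorem tendsto_exp_neg_sq_atTop : Tendsto (fun t : ℝ => exp (-t ^ 2)) atTop (𝓝 0) :=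
  tendsto_exp_atBot.comp <| tendsto_neg_atTop_atBot.comp <| tendsto_pow_atTop two_ne_zero

theorem hasDerivAt_exp_neg_sq (t : ℝ) :
    HasDerivAt (fun t : ℝ => exp (-t ^ 2)) (-(2 * t) * exp (-t ^ 2)) t := by
  simpa [mul_comm] using ((hasDerivAt_pow 2 t).neg).exp

theorem integral_exp_neg_sq_Ioi_le {x : ℝ} (hx : 0 < x) :
    ∫ t in Ioi x, exp (-t ^ 2) ≤ exp (-x ^ 2) / (2 * x) := by
  have hderiv : ∀ t ∈ Ici x, HasDerivAt (fun t => -exp (-t ^ 2) / (2 * x))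
      (t * exp (-t ^ 2) / x) t := fun t _ => by
    refine (((hasDerivAt_exp_neg_sq t).neg).div_const (2 * x)).congr_deriv ?_
    field_simp
  have hint : IntegrableOn (fun t => t * exp (-t ^ 2) / x) (Ioi x) := by
    simpa using ((integrable_mul_exp_neg_mul_sq one_pos).div_const x).integrableOn
  have hlim : Tendsto (fun t => -exp (-t ^ 2) / (2 * x)) atTop (𝓝 0) := by
    simpa using (tendsto_exp_neg_sq_atTop.neg).div_const (2 * x)
  have hle : ∀ t ∈ Ioi x, exp (-t ^ 2) ≤ t * exp (-t ^ 2) / x := fun t ht => by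
    rw [le_div_iff₀ hx, mul_comm]
    exact mul_le_mul_of_nonneg_right (le_of_lt ht) (exp_pos _).le
  have := setIntegral_Ioi_le_of_hasDerivAt_of_tendsto hderiv hint hlim
    integrable_exp_neg_sq.integrableOn hle
  rwa [neg_div, neg_neg] at this

theorem lt_integral_exp_neg_sq_Ioi (x : ℝ) :
    x * exp (-x ^ 2) / (2 * x ^ 2 + 1) < ∫ t in Ioi x, exp (-t ^ 2) := by
  set r : ℝ → ℝ := fun t => 2 * exp (-t ^ 2) / (2 * t ^ 2 + 1) ^ 2
  have hderiv : ∀ t ∈ Ici x, HasDerivAt (fun t => -(t * exp (-t ^ 2)) / (2 * t ^ 2 + 1))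
      (exp (-t ^ 2) - r t) t := fun t _ => by
    have hden : HasDerivAt (fun t : ℝ => 2 * t ^ 2 + 1) (2 * (2 * t)) t := by
      simpa using ((hasDerivAt_pow 2 t).const_mul 2).add_const 1
    refine ((((hasDerivAt_id t).mul (hasDerivAt_exp_neg_sq t)).neg).div hden
      (by positivity)).congr_deriv ?_
    simp only [r, Pi.neg_apply, Pi.mul_apply, id]
    field_simp
    ring
  have hr : Integrable r := by
    refine (integrable_exp_neg_sq.const_mul 2).mono' (by fun_prop) (ae_of_all _ fun t => ?_)
    rw [norm_of_nonneg (by positivity)]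
    exact div_le_self (by positivity) (one_le_pow₀ (by nlinarith))
  have hlim : Tendsto (fun t => -(t * exp (-t ^ 2)) / (2 * t ^ 2 + 1)) atTop (𝓝 0) := by
    refine squeeze_zero_norm (fun t => ?_) tendsto_exp_neg_sq_atTop
    rw [norm_div, norm_neg, norm_mul, norm_of_nonneg (exp_pos _).le,
      norm_of_nonneg (by positivity : (0 : ℝ) ≤ 2 * t ^ 2 + 1), div_le_iff₀ (by positivity)]
    have : ‖t‖ ≤ 2 * t ^ 2 + 1 := by
      rw [Real.norm_eq_abs]; nlinarith [abs_nonneg t, sq_abs t, sq_nonneg (|t| - 1)]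
    nlinarith [exp_pos (-t ^ 2)]
  have := neg_lt_setIntegral_Ioi_of_hasDerivAt_of_tendsto hderiv
    (integrable_exp_neg_sq.sub hr).integrableOn hlim integrable_exp_neg_sq.integrableOn
    fun t _ => sub_lt_self _ (by positivity)
  rwa [neg_div, neg_neg] at this

theorem V0_le_one_div {x : ℝ} (hx : 0 < x) : V0 x ≤ 1 / x :=
  calc V0 x ≤ 2 * exp (x ^ 2) * (exp (-x ^ 2) / (2 * x)) := by
        unfold V0; gcongr; exact integral_exp_neg_sq_Ioi_le hx
    _ = 1 / x := by rw [exp_neg]; field_simp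

theorem two_mul_div_lt_V0 (x : ℝ) : 2 * x / (2 * x ^ 2 + 1) < V0 x :=
  calc 2 * x / (2 * x ^ 2 + 1) = 2 * exp (x ^ 2) * (x * exp (-x ^ 2) / (2 * x ^ 2 + 1)) := by
        rw [exp_neg]; field_simp
    _ < V0 x := by unfold V0; gcongr; exact lt_integral_exp_neg_sq_Ioi x

theorem nu_close_to_linear : ∀ x : ℝ, 0 < x → |1 / V0 x - x| < 1 / (2*x) := by
  intro x hx
  have hV : 0 < V0 x := lt_trans (by positivity) (two_mul_div_lt_V0 x)
  have lower : x ≤ 1 / V0 x := (le_one_div hx hV).mpr (V0_le_one_div hx)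
  have upper : 1 / V0 x < x + 1 / (2 * x) :=
    calc 1 / V0 x < 1 / (2 * x / (2 * x ^ 2 + 1)) :=
          one_div_lt_one_div_of_lt (by positivity) (two_mul_div_lt_V0 x)
      _ = x + 1 / (2 * x) := by field_simp
  have : 0 < 1 / (2 * x) := by positivity
  rw [abs_lt]
  constructor <;> linarith
end
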